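/- For every P ∈ E(ℚ_p), one has 0 ≤ ε(P) ≤ v(Δ(W)). -/

import Mathlib

/-!
The error `ε(P)` is computed on the pair `(x, 1)`. If `x` is integral, so are `δ₁(x, 1)` and
`δ₂(x, 1)`, whence `ε(P) ≥ 0`; and `Δ` is an integral combination of `δ₁(x, 1)` and `δ₂(x, 1)`,
whence `ε(P) ≤ v(Δ)`. If `v(x) < 0`, homogeneity moves the computation to the pair `(1, x⁻¹)`,
where `δ₁ ≡ 1` modulo `p` and `δ₂` is integral, so `ε(P) = 0`; likewise `ε(O) = 0`.
-/

open WeierstrassCurve Classical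

/-- The first duplication polynomial `δ₁(x₁,x₂) = x₁⁴ − b₄x₁²x₂² − 2b₆x₁x₂³ − b₈x₂⁴`. -/
def delta1 {R : Type*} [CommRing R] (W : WeierstrassCurve R) (x₁ x₂ : R) : R :=
  x₁ ^ 4 - W.b₄ * x₁ ^ 2 * x₂ ^ 2 - 2 * W.b₆ * x₁ * x₂ ^ 3 - W.b₈ * x₂ ^ 4

/-- The second duplication polynomial `δ₂(x₁,x₂) = 4x₁³x₂ + b₂x₁²x₂² + 2b₄x₁x₂³ + b₆x₂⁴`. -/
def delta2 {R : Type*} [CommRing R] (W : WeierstrassCurve R) (x₁ x₂ : R) : R :=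
  4 * x₁ ^ 3 * x₂ + W.b₂ * x₁ ^ 2 * x₂ ^ 2 + 2 * W.b₄ * x₁ * x₂ ^ 3 + W.b₆ * x₂ ^ 4

variable {p : ℕ} [Fact p.Prime]

/-- `min{v(x₁), v(x₂)}`, where terms with argument `0` are omitted from the minimum.
(This is only meaningful for `(x₁, x₂) ≠ (0, 0)`.) -/
noncomputable def vmin (x₁ x₂ : ℚ_[p]) : ℤ :=
  if x₁ = 0 then x₂.valuation
  else if x₂ = 0 then x₁.valuation
  else min x₁.valuation x₂.valuation

/-- The canonical pair of Kummer coordinates of a point `P`: `(1, 0)` if `P = O`, and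
`(x(P), 1)` if `P` is affine.  (Any pair of Kummer coordinates for `P` is a nonzero
scalar multiple of this pair, and `ε` is independent of this choice.) -/
noncomputable def kummer {W : Affine ℚ_[p]} : W.Point → ℚ_[p] × ℚ_[p]
  | .zero => (1, 0)
  | @Affine.Point.some _ _ _ x _ _ => (x, 1)

/-- The local error function
`ε(P) = min{v(δ₁(x₁,x₂)), v(δ₂(x₁,x₂))} − 4·min{v(x₁), v(x₂)}`,
computed on the canonical pair of Kummer coordinates of `P`. -/
noncomputable def eps (W : Affine ℚ_[p]) (P : W.Point) : ℤ :=
  vmin (delta1 W (kummer P).1 (kummer P).2) (delta2 W (kummer P).1 (kummer P).2)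
    - 4 * vmin (kummer P).1 (kummer P).2

/-- The local height correction function `μ(P) = Σ_{n=0}^∞ 4^{−n−1} ε(2ⁿP)`. -/
noncomputable def mu (W : Affine ℚ_[p]) (P : W.Point) : ℝ :=
  ∑' n : ℕ, (eps W ((2 ^ n : ℕ) • P) : ℝ) / 4 ^ (n + 1)

section DuplicationPolynomials

variable {R : Type*} [CommRing R] (W : WeierstrassCurve R)

lemma delta1_mul_mul (c x₁ x₂ : R) : delta1 W (c * x₁) (c * x₂) = c ^ 4 * delta1 W x₁ x₂ := by
  unfold delta1; ring

lemma delta2_mul_mul (c x₁ x₂ : R) : delta2 W (c * x₁) (c * x₂) = c ^ 4 * delta2 W x₁ x₂ := by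
  unfold delta2; ring

lemma map_delta1 {S : Type*} [CommRing S] (f : R →+* S) (x₁ x₂ : R) :
    delta1 (W.map f) (f x₁) (f x₂) = f (delta1 W x₁ x₂) := by
  simp [delta1, map_ofNat]

lemma map_delta2 {S : Type*} [CommRing S] (f : R →+* S) (x₁ x₂ : R) :
    delta2 (W.map f) (f x₁) (f x₂) = f (delta2 W x₁ x₂) := by
  simp [delta2, map_ofNat]

lemma dvd_delta1_one_sub_one (t : R) : t ∣ delta1 W 1 t - 1 :=
  ⟨-(W.b₄ * t + 2 * W.b₆ * t ^ 2 + W.b₈ * t ^ 3), by unfold delta1; ring⟩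

lemma Δ_mem_span_delta (x : R) : W.Δ ∈ Ideal.span {delta1 W x 1, delta2 W x 1} :=
  Ideal.mem_span_pair.mpr ⟨W.b₂ ^ 2 - 32 * W.b₄ - 8 * W.b₂ * x - 48 * x ^ 2,
    W.b₂ * W.b₄ - 27 * W.b₆ - 10 * W.b₄ * x - W.b₂ * x ^ 2 + 12 * x ^ 3, by
      unfold delta1 delta2
      rw [Δ]
      linear_combination (8 * W.b₄ + 2 * W.b₂ * x + 12 * x ^ 2) * W.b_relation⟩

lemma delta1_eq_pow_mul_delta1_one_inv {K : Type*} [Field K] (W : WeierstrassCurve K) {x : K}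
    (hx : x ≠ 0) : delta1 W x 1 = x ^ 4 * delta1 W 1 x⁻¹ := by
  rw [← delta1_mul_mul, mul_one, mul_inv_cancel₀ hx]

lemma delta2_eq_pow_mul_delta2_one_inv {K : Type*} [Field K] (W : WeierstrassCurve K) {x : K}
    (hx : x ≠ 0) : delta2 W x 1 = x ^ 4 * delta2 W 1 x⁻¹ := by
  rw [← delta2_mul_mul, mul_one, mul_inv_cancel₀ hx]

end DuplicationPolynomials

namespace Padic

lemma valuation_le_valuation_of_norm_le {x y : ℚ_[p]} (hx : x ≠ 0) (h : ‖x‖ ≤ ‖y‖) :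
    y.valuation ≤ x.valuation := by
  have hy : y ≠ 0 := norm_pos_iff.mp ((norm_pos_iff.mpr hx).trans_le h)
  have hp : (1 : ℝ) < p := mod_cast (Fact.out : p.Prime).one_lt
  rwa [norm_eq_zpow_neg_valuation hx, norm_eq_zpow_neg_valuation hy,
    zpow_le_zpow_iff_right₀ hp, neg_le_neg_iff] at h

lemma valuation_eq_of_norm_eq {x y : ℚ_[p]} (h : ‖x‖ = ‖y‖) : x.valuation = y.valuation := by
  rcases eq_or_ne x 0 with rfl | hx
  · rw [norm_zero, eq_comm, norm_eq_zero] at h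
    rw [h]
  · have hy : y ≠ 0 := norm_ne_zero_iff.mp (h ▸ norm_ne_zero_iff.mpr hx)
    exact le_antisymm (valuation_le_valuation_of_norm_le hy h.ge)
      (valuation_le_valuation_of_norm_le hx h.le)

end Padic

open Padic

section Vmin

variable {a b : ℚ_[p]}

lemma vmin_eq_left (ha : a ≠ 0) (h : ‖b‖ ≤ ‖a‖) : vmin a b = a.valuation := by
  unfold vmin
  split_ifs with ha' hb
  · exact absurd ha' ha
  · rfl
  · exact min_eq_left (valuation_le_valuation_of_norm_le hb h)

lemma vmin_eq_right (hb : b ≠ 0) (h : ‖a‖ ≤ ‖b‖) : vmin a b = b.valuation := by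
  unfold vmin
  split_ifs with ha
  · rfl
  · exact min_eq_right (valuation_le_valuation_of_norm_le ha h)

lemma vmin_nonneg (ha : ‖a‖ ≤ 1) (hb : ‖b‖ ≤ 1) : 0 ≤ vmin a b := by
  rw [norm_le_one_iff_val_nonneg] at ha hb
  unfold vmin
  split_ifs
  exacts [hb, ha, le_min ha hb]

lemma vmin_le_valuation {c : ℚ_[p]} (hc : c ≠ 0) (h : ‖c‖ ≤ max ‖a‖ ‖b‖) :
    vmin a b ≤ c.valuation := by
  unfold vmin
  split_ifs with ha hb
  · exact valuation_le_valuation_of_norm_le hc (by simpa [ha] using h)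
  · exact valuation_le_valuation_of_norm_le hc (by simpa [hb] using h)
  · rcases le_max_iff.mp h with h | h
    · exact (min_le_left _ _).trans (valuation_le_valuation_of_norm_le hc h)
    · exact (min_le_right _ _).trans (valuation_le_valuation_of_norm_le hc h)

end Vmin

namespace PadicInt

lemma norm_le_max_of_mem_span_pair {z a b : ℤ_[p]} (h : z ∈ Ideal.span {a, b}) :
    ‖z‖ ≤ max ‖a‖ ‖b‖ := by
  obtain ⟨u, v, rfl⟩ := Ideal.mem_span_pair.mp h
  refine (nonarchimedean _ _).trans (max_le_max ?_ ?_) <;> rw [norm_mul]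
  · exact mul_le_of_le_one_left (norm_nonneg a) (norm_le_one u)
  · exact mul_le_of_le_one_left (norm_nonneg b) (norm_le_one v)

lemma norm_eq_one_of_dvd_sub_one {t z : ℤ_[p]} (ht : ‖t‖ < 1) (h : t ∣ z - 1) : ‖z‖ = 1 := by
  obtain ⟨g, hg⟩ := h
  have hlt : ‖z - 1‖ < ‖(1 : ℤ_[p])‖ := by
    rw [hg, norm_mul, norm_one]
    exact (mul_le_of_le_one_right (norm_nonneg t) (norm_le_one g)).trans_lt ht
  have := IsUltrametricDist.norm_add_eq_max_of_norm_ne_norm hlt.ne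
  rwa [sub_add_cancel, max_eq_right hlt.le, norm_one] at this

end PadicInt

lemma eps_some (W : Affine ℚ_[p]) {x y : ℚ_[p]} (h : W.Nonsingular x y) :
    eps W (.some x y h) = vmin (delta1 W x 1) (delta2 W x 1) - 4 * vmin x 1 :=
  rfl

lemma eps_zero (W : Affine ℚ_[p]) : eps W .zero = 0 := by
  simp [eps, kummer, delta1, delta2, vmin]

section IntegralModel

variable (W : WeierstrassCurve ℤ_[p])

lemma delta1_baseChange (x₁ x₂ : ℤ_[p]) :
    delta1 (W.baseChange ℚ_[p]) x₁ x₂ = ((delta1 W x₁ x₂ : ℤ_[p]) : ℚ_[p]) :=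
  map_delta1 W _ x₁ x₂

lemma delta2_baseChange (x₁ x₂ : ℤ_[p]) :
    delta2 (W.baseChange ℚ_[p]) x₁ x₂ = ((delta2 W x₁ x₂ : ℤ_[p]) : ℚ_[p]) :=
  map_delta2 W _ x₁ x₂

lemma norm_Δ_baseChange_le_one : ‖(W.baseChange ℚ_[p]).Δ‖ ≤ 1 := by
  rw [baseChange, map_Δ]
  exact PadicInt.norm_le_one _

lemma norm_delta1_baseChange_one {t : ℚ_[p]} (ht : ‖t‖ < 1) :
    ‖delta1 (W.baseChange ℚ_[p]) 1 t‖ = 1 := by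
  obtain ⟨T, rfl⟩ : ∃ T : ℤ_[p], (T : ℚ_[p]) = t := ⟨⟨t, ht.le⟩, rfl⟩
  rw [← PadicInt.coe_one, delta1_baseChange, ← PadicInt.norm_def]
  exact PadicInt.norm_eq_one_of_dvd_sub_one ht (dvd_delta1_one_sub_one W T)

lemma norm_delta2_baseChange_one_le {t : ℚ_[p]} (ht : ‖t‖ ≤ 1) :
    ‖delta2 (W.baseChange ℚ_[p]) 1 t‖ ≤ 1 := by
  obtain ⟨T, rfl⟩ : ∃ T : ℤ_[p], (T : ℚ_[p]) = t := ⟨⟨t, ht⟩, rfl⟩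
  rw [← PadicInt.coe_one, delta2_baseChange]
  exact PadicInt.norm_le_one _

lemma norm_Δ_baseChange_le_max (X : ℤ_[p]) :
    ‖(W.baseChange ℚ_[p]).Δ‖ ≤
      max ‖((delta1 W X 1 : ℤ_[p]) : ℚ_[p])‖ ‖((delta2 W X 1 : ℤ_[p]) : ℚ_[p])‖ := by
  rw [baseChange, map_Δ]
  exact PadicInt.norm_le_max_of_mem_span_pair (Δ_mem_span_delta W X)

variable {W} {y : ℚ_[p]}

lemma eps_some_eq_zero_of_one_lt_norm {x : ℚ_[p]}
    (h : (W.baseChange ℚ_[p]).toAffine.Nonsingular x y) (hx : 1 < ‖x‖) :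
    eps (W.baseChange ℚ_[p]) (.some x y h) = 0 := by
  have hx0 : x ≠ 0 := norm_pos_iff.mp (one_pos.trans hx)
  have ht : ‖x⁻¹‖ < 1 := by rw [norm_inv]; exact inv_lt_one_of_one_lt₀ hx
  have hδ₁ : ‖delta1 (W.baseChange ℚ_[p]) x 1‖ = ‖x ^ 4‖ := by
    rw [delta1_eq_pow_mul_delta1_one_inv _ hx0, norm_mul, norm_delta1_baseChange_one W ht,
      mul_one]
  have hδ₂ : ‖delta2 (W.baseChange ℚ_[p]) x 1‖ ≤ ‖x ^ 4‖ := by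
    rw [delta2_eq_pow_mul_delta2_one_inv _ hx0, norm_mul]
    exact mul_le_of_le_one_right (norm_nonneg _) (norm_delta2_baseChange_one_le W ht.le)
  have hδ₁0 : delta1 (W.baseChange ℚ_[p]) x 1 ≠ 0 := by
    rw [← norm_ne_zero_iff, hδ₁]
    exact norm_ne_zero_iff.mpr (pow_ne_zero 4 hx0)
  rw [eps_some, vmin_eq_left hδ₁0 (hδ₂.trans hδ₁.ge), valuation_eq_of_norm_eq hδ₁, valuation_pow,
    vmin_eq_left hx0 (by rw [norm_one]; exact hx.le)]
  push_cast
  ring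

lemma eps_some_coe {X : ℤ_[p]} (h : (W.baseChange ℚ_[p]).toAffine.Nonsingular X y) :
    eps (W.baseChange ℚ_[p]) (.some X y h) =
      vmin ((delta1 W X 1 : ℤ_[p]) : ℚ_[p]) ((delta2 W X 1 : ℤ_[p]) : ℚ_[p]) := by
  rw [eps_some, vmin_eq_right one_ne_zero (by rw [norm_one]; exact PadicInt.norm_le_one X),
    valuation_one, mul_zero, sub_zero, ← PadicInt.coe_one, delta1_baseChange, delta2_baseChange]

end IntegralModel

/-- `0 ≤ ε(P) ≤ v(Δ(W))`. -/
theorem statement5 (W : Affine ℚ_[p]) (hΔ : W.Δ ≠ 0)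
    (hint : ‖W.a₁‖ ≤ 1 ∧ ‖W.a₂‖ ≤ 1 ∧ ‖W.a₃‖ ≤ 1 ∧ ‖W.a₄‖ ≤ 1 ∧ ‖W.a₆‖ ≤ 1)
    (P : W.Point) :
    0 ≤ eps W P ∧ eps W P ≤ W.Δ.valuation := by
  obtain ⟨h₁, h₂, h₃, h₄, h₆⟩ := hint
  obtain ⟨W, rfl⟩ : ∃ W₀ : WeierstrassCurve ℤ_[p], W₀.baseChange ℚ_[p] = W :=
    ⟨⟨⟨_, h₁⟩, ⟨_, h₂⟩, ⟨_, h₃⟩, ⟨_, h₄⟩, ⟨_, h₆⟩⟩, rfl⟩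
  have hΔ₀ : 0 ≤ (W.baseChange ℚ_[p]).Δ.valuation :=
    (norm_le_one_iff_val_nonneg _).mp (norm_Δ_baseChange_le_one W)
  rcases P with _ | @⟨x, y, h⟩
  · rw [eps_zero]
    exact ⟨le_rfl, hΔ₀⟩
  by_cases hx : ‖x‖ ≤ 1
  · obtain ⟨X, rfl⟩ : ∃ X : ℤ_[p], (X : ℚ_[p]) = x := ⟨⟨x, hx⟩, rfl⟩
    rw [eps_some_coe h]
    exact ⟨vmin_nonneg (PadicInt.norm_le_one _) (PadicInt.norm_le_one _),
      vmin_le_valuation hΔ (norm_Δ_baseChange_le_max W _)⟩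
  · rw [eps_some_eq_zero_of_one_lt_norm h (not_le.mp hx)]
    exact ⟨le_rfl, hΔ₀⟩
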